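/- arXiv:2006.00693 — 6 statements merged into one kernel-verified Lean document; each statement's English description precedes it below -/
import Mathlib

section
/- Let S and C be finite nonempty types and let p be a joint probability mass function on S × C with strictly positive values, with marginals p_S, p_C and conditional p(s|c) = p(s,c)/p_C(c). Then the gap Δ := ( Σ_{s,c} p(s,c) · log p(s|c) − Σ_s p_S(s) Σ_c p_C(c) · log p(s|c) ) − I(s;c) satisfies the identity Δ = Σ_s p_S(s) · ( log( Σ_c p_C(c) · p(s|c) ) − Σ_c p_C(c) · log p(s|c) ), and consequently Δ ≥ 0. -/
/-- The gap computation in the proof of Theorem 3.1 of the paper: the gap `Δ`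
between the difference of expected conditional log-likelihoods (under the joint
and under the product of marginals) and the mutual information `I(s;c)` equals
`∑ s, p_S(s) * ( log (∑ c, p_C(c) * p(s|c)) − ∑ c, p_C(c) * log p(s|c) )`,
and hence (by Jensen's inequality) is nonnegative.
Here `p(s|c) = p(s,c) / p_C(c)`, `p_S(s) = ∑ c, p(s,c)`, `p_C(c) = ∑ s, p(s,c)`. -/
theorem mi_gap_identity_and_nonneg
    {S C : Type*} [Fintype S] [Fintype C] [Nonempty S] [Nonempty C]
    (p : S → C → ℝ)
    (hpos : ∀ s c, 0 < p s c)
    (hsum : ∑ s : S, ∑ c : C, p s c = 1)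
    (Δ : ℝ)
    (hΔ : Δ = ((∑ s : S, ∑ c : C, p s c * Real.log (p s c / (∑ s' : S, p s' c)))
          - ∑ s : S, (∑ c' : C, p s c')
              * ∑ c : C, (∑ s' : S, p s' c) * Real.log (p s c / (∑ s' : S, p s' c)))
        - ∑ s : S, ∑ c : C,
            p s c * Real.log (p s c / ((∑ c' : C, p s c') * (∑ s' : S, p s' c)))) :
    Δ = (∑ s : S, (∑ c' : C, p s c')
          * (Real.log (∑ c : C, (∑ s' : S, p s' c) * (p s c / (∑ s' : S, p s' c)))
              - ∑ c : C, (∑ s' : S, p s' c) * Real.log (p s c / (∑ s' : S, p s' c))))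
      ∧ 0 ≤ Δ := by
  have hpSpos : ∀ s, 0 < ∑ c' : C, p s c' :=
    fun s => Finset.sum_pos (fun c _ => hpos s c) Finset.univ_nonempty
  have hpCpos : ∀ c, 0 < ∑ s' : S, p s' c :=
    fun c => Finset.sum_pos (fun s _ => hpos s c) Finset.univ_nonempty
  -- ∑ c, pC c * (p s c / pC c) = pS s
  have hkey : ∀ s : S, (∑ c : C, (∑ s' : S, p s' c) * (p s c / (∑ s' : S, p s' c)))
      = ∑ c' : C, p s c' := by
    intro s
    refine Finset.sum_congr rfl fun c _ => ?_
    rw [mul_comm, div_mul_cancel₀ _ (hpCpos c).ne']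
  -- rewrite log of ratio over product
  have hlog : ∀ s c, Real.log (p s c / ((∑ c' : C, p s c') * (∑ s' : S, p s' c)))
      = Real.log (p s c / (∑ s' : S, p s' c)) - Real.log (∑ c' : C, p s c') := by
    intro s c
    rw [show p s c / ((∑ c' : C, p s c') * (∑ s' : S, p s' c))
        = (p s c / (∑ s' : S, p s' c)) / (∑ c' : C, p s c') by ring,
      Real.log_div (div_pos (hpos s c) (hpCpos c)).ne' (hpSpos s).ne']
  have hident : Δ = (∑ s : S, (∑ c' : C, p s c')
          * (Real.log (∑ c : C, (∑ s' : S, p s' c) * (p s c / (∑ s' : S, p s' c)))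
              - ∑ c : C, (∑ s' : S, p s' c) * Real.log (p s c / (∑ s' : S, p s' c)))) := by
    rw [hΔ]
    have h1 : ∀ s : S, ∑ c : C, p s c * Real.log (p s c / ((∑ c' : C, p s c') * (∑ s' : S, p s' c)))
        = (∑ c : C, p s c * Real.log (p s c / (∑ s' : S, p s' c)))
          - (∑ c' : C, p s c') * Real.log (∑ c' : C, p s c') := by
      intro s
      rw [Finset.sum_mul]
      rw [← Finset.sum_sub_distrib]
      refine Finset.sum_congr rfl fun c _ => ?_
      rw [hlog s c]; ring
    simp only [h1, hkey, mul_sub]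
    rw [Finset.sum_sub_distrib, Finset.sum_sub_distrib]
    ring
  refine ⟨hident, ?_⟩
  rw [hident]
  apply Finset.sum_nonneg
  intro s _
  apply mul_nonneg (hpSpos s).le
  rw [sub_nonneg]
  -- Jensen's inequality for log
  have hwsum : ∑ c : C, (∑ s' : S, p s' c) = 1 := by
    rw [← hsum, Finset.sum_comm]
  have := (strictConcaveOn_log_Ioi.concaveOn).le_map_sum
    (t := Finset.univ) (w := fun c : C => ∑ s' : S, p s' c)
    (p := fun c : C => p s c / (∑ s' : S, p s' c))
    (fun c _ => (hpCpos c).le) hwsum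
    (fun c _ => Set.mem_Ioi.mpr (div_pos (hpos s c) (hpCpos c)))
  simpa using this
end

section
/- Let S and C be finite nonempty types, let p be a joint probability mass function on S × C with strictly positive values, with conditional p(s|c) = p(s,c)/p_C(c), and let M ≥ 2. Let (s_1,c_1), …, (s_M,c_M) be independent and identically distributed random pairs, each distributed according to p. Then the leave-one-out statistic (1/M) Σ_{j=1}^M ( log p(s_j|c_j) − (1/(M−1)) Σ_{k ≠ j} log p(s_j|c_k) ) has expectation equal to Σ_{s,c} p(s,c) · log p(s|c) − Σ_s p_S(s) Σ_c p_C(c) · log p(s|c). -/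
open Finset

/-- Product of a function that is 1 away from two distinct indices. -/
lemma prod_two_special {ι : Type*} [Fintype ι] [DecidableEq ι] {j k : ι} (hjk : j ≠ k)
    (f : ι → ℝ) (hf : ∀ i, i ≠ j → i ≠ k → f i = 1) : ∏ i, f i = f j * f k := by
  rw [← Finset.mul_prod_erase univ f (mem_univ j),
      ← Finset.mul_prod_erase _ f (Finset.mem_erase.mpr ⟨hjk.symm, mem_univ k⟩)]
  rw [Finset.prod_eq_one, mul_one]
  intro i hi
  simp only [Finset.mem_erase] at hi
  exact hf i hi.2.1 hi.1

lemma pair_marginal {X : Type*} [Fintype X] {M : ℕ} (w : X → ℝ)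
    (hw : ∑ x, w x = 1) (j k : Fin M) (hjk : j ≠ k) (F : X → X → ℝ) :
    ∑ ω : Fin M → X, (∏ i, w (ω i)) * F (ω j) (ω k)
      = ∑ x : X, ∑ y : X, (w x * w y) * F x y := by
  classical
  have key : ∀ (x y : X),
      ∑ ω : Fin M → X, (∏ i, w (ω i))
        * ((if ω j = x then (1:ℝ) else 0) * (if ω k = y then 1 else 0))
      = w x * w y := by
    intro x y
    have hpt : ∀ ω : Fin M → X,
        (∏ i, w (ω i)) * ((if ω j = x then (1:ℝ) else 0) * (if ω k = y then 1 else 0))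
        = ∏ i, (w (ω i) * (if i = j then (if ω i = x then (1:ℝ) else 0)
            else if i = k then (if ω i = y then 1 else 0) else 1)) := by
      intro ω
      rw [Finset.prod_mul_distrib]
      congr 1
      rw [prod_two_special hjk
            (f := fun i => (if i = j then (if ω i = x then (1:ℝ) else 0)
              else if i = k then (if ω i = y then 1 else 0) else 1))]
      · simp [hjk, Ne.symm hjk]
      · intro i hij hik; simp [hij, hik]
    simp_rw [hpt]
    rw [← Fintype.prod_sum (fun (i : Fin M) (z : X) => w z * (if i = j then (if z = x then (1:ℝ) else 0)
            else if i = k then (if z = y then 1 else 0) else 1))]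
    have hcol : ∀ i : Fin M,
        (∑ z, w z * (if i = j then (if z = x then (1:ℝ) else 0)
            else if i = k then (if z = y then 1 else 0) else 1))
        = (if i = j then w x else if i = k then w y else 1) := by
      intro i
      by_cases hij : i = j
      · simp [hij, mul_ite, mul_one, mul_zero, Finset.sum_ite_eq']
      · by_cases hik : i = k
        · simp [hij, hik, mul_ite, mul_one, mul_zero, Finset.sum_ite_eq']
        · simp [hij, hik, hw]
    simp_rw [hcol]
    rw [prod_two_special hjk _ (fun i hij hik => by simp [hij, hik])]
    simp [hjk, Ne.symm hjk]
  have hF : ∀ a b : X, F a b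
      = ∑ x, ∑ y, ((if a = x then (1:ℝ) else 0) * (if b = y then 1 else 0)) * F x y := by
    intro a b
    simp [ite_mul, one_mul, zero_mul, Finset.sum_ite_eq]
  calc ∑ ω : Fin M → X, (∏ i, w (ω i)) * F (ω j) (ω k)
      = ∑ ω : Fin M → X, ∑ x, ∑ y,
          ((∏ i, w (ω i)) * ((if ω j = x then (1:ℝ) else 0) * (if ω k = y then 1 else 0)))
            * F x y := by
        refine Finset.sum_congr rfl fun ω _ => ?_
        rw [hF (ω j) (ω k)]
        simp_rw [Finset.mul_sum, ← mul_assoc]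
    _ = ∑ x, ∑ y, (∑ ω : Fin M → X,
          (∏ i, w (ω i)) * ((if ω j = x then (1:ℝ) else 0) * (if ω k = y then 1 else 0)))
            * F x y := by
        rw [Finset.sum_comm]
        refine Finset.sum_congr rfl fun x _ => ?_
        rw [Finset.sum_comm]
        refine Finset.sum_congr rfl fun y _ => ?_
        rw [Finset.sum_mul]
    _ = ∑ x, ∑ y, (w x * w y) * F x y := by simp_rw [key]

lemma one_marginal {X : Type*} [Fintype X] {M : ℕ} (hM : 2 ≤ M) (w : X → ℝ)
    (hw : ∑ x, w x = 1) (j : Fin M) (f : X → ℝ) :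
    ∑ ω : Fin M → X, (∏ i, w (ω i)) * f (ω j) = ∑ x : X, w x * f x := by
  have hcard : 1 < Fintype.card (Fin M) := by rw [Fintype.card_fin]; omega
  obtain ⟨k, hk⟩ := Fintype.exists_ne_of_one_lt_card hcard j
  have := pair_marginal w hw j k (Ne.symm hk) (fun x _ => f x)
  rw [this]
  have h2 : ∀ x : X, ∑ y : X, (w x * w y) * f x = w x * f x := by
    intro x
    rw [← Finset.sum_mul, ← Finset.mul_sum, hw, mul_one]
  simp_rw [h2]


/-- The unbiasedness claim in the proof of Theorem 3.1 of the paper.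
`M ≥ 2` i.i.d. pairs `(s_j, c_j) ~ p` are modeled by the product law on
`Fin M → S × C`: an outcome `ω` has probability `∏ j, p (ω j)`, and the
expectation of a statistic is the correspondingly weighted sum.  The
leave-one-out statistic
`(1/M) ∑_j ( log p(s_j|c_j) − (1/(M−1)) ∑_{k ≠ j} log p(s_j|c_k) )`
has expectation
`∑_{s,c} p(s,c) log p(s|c) − ∑_s p_S(s) ∑_c p_C(c) log p(s|c)`,
where `p(s|c) = p(s,c)/p_C(c)`. -/
theorem leave_one_out_unbiased
    {S C : Type*} [Fintype S] [Fintype C] [Nonempty S] [Nonempty C]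
    (p : S → C → ℝ)
    (hpos : ∀ s c, 0 < p s c)
    (hsum : ∑ s : S, ∑ c : C, p s c = 1)
    (M : ℕ) (hM : 2 ≤ M) :
    (∑ ω : Fin M → S × C,
        (∏ j : Fin M, p (ω j).1 (ω j).2) *
          ((1 / (M : ℝ)) * ∑ j : Fin M,
            (Real.log (p (ω j).1 (ω j).2 / (∑ s' : S, p s' (ω j).2))
              - (1 / ((M : ℝ) - 1)) *
                  ∑ k ∈ Finset.univ.erase j,
                    Real.log (p (ω j).1 (ω k).2 / (∑ s' : S, p s' (ω k).2)))))
      = (∑ s : S, ∑ c : C, p s c * Real.log (p s c / (∑ s' : S, p s' c)))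
        - ∑ s : S, (∑ c' : C, p s c')
            * ∑ c : C, (∑ s' : S, p s' c) * Real.log (p s c / (∑ s' : S, p s' c)) := by
  classical
  set w : S × C → ℝ := fun x => p x.1 x.2 with hw_def
  have hw : ∑ x : S × C, w x = 1 := by
    rw [Fintype.sum_prod_type]; exact hsum
  set L : S × C → S × C → ℝ :=
    fun x y => Real.log (p x.1 y.2 / ∑ s' : S, p s' y.2) with hL_def
  set A0 : ℝ := ∑ x : S × C, w x * L x x with hA0_def
  set B0 : ℝ := ∑ x : S × C, ∑ y : S × C, (w x * w y) * L x y with hB0_def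
  have h1 : ∀ j : Fin M,
      ∑ ω : Fin M → S × C, (∏ i, w (ω i)) * L (ω j) (ω j) = A0 :=
    fun j => one_marginal hM w hw j (fun x => L x x)
  have h2 : ∀ j k : Fin M, j ≠ k →
      ∑ ω : Fin M → S × C, (∏ i, w (ω i)) * L (ω j) (ω k) = B0 :=
    fun j k hjk => pair_marginal w hw j k hjk L
  have hM0 : (M : ℝ) ≠ 0 := by positivity
  have hM1 : (M : ℝ) - 1 ≠ 0 := by
    have : (2 : ℝ) ≤ (M : ℝ) := by exact_mod_cast hM
    linarith
  have key : (∑ ω : Fin M → S × C,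
        (∏ j : Fin M, w (ω j)) *
          ((1 / (M : ℝ)) * ∑ j : Fin M,
            (L (ω j) (ω j)
              - (1 / ((M : ℝ) - 1)) * ∑ k ∈ Finset.univ.erase j, L (ω j) (ω k))))
      = A0 - B0 := by
    calc (∑ ω : Fin M → S × C,
        (∏ j : Fin M, w (ω j)) *
          ((1 / (M : ℝ)) * ∑ j : Fin M,
            (L (ω j) (ω j)
              - (1 / ((M : ℝ) - 1)) * ∑ k ∈ Finset.univ.erase j, L (ω j) (ω k))))
        = ∑ ω : Fin M → S × C, ∑ j : Fin M, (1 / (M : ℝ)) *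
            ((∏ i, w (ω i)) * L (ω j) (ω j)
              - (1 / ((M : ℝ) - 1)) *
                  ∑ k ∈ Finset.univ.erase j, (∏ i, w (ω i)) * L (ω j) (ω k)) := by
          refine Finset.sum_congr rfl fun ω _ => ?_
          rw [mul_left_comm, Finset.mul_sum, Finset.mul_sum]
          refine Finset.sum_congr rfl fun j _ => ?_
          rw [← Finset.mul_sum]
          ring
      _ = ∑ j : Fin M, (1 / (M : ℝ)) *
            ((∑ ω : Fin M → S × C, (∏ i, w (ω i)) * L (ω j) (ω j))
              - (1 / ((M : ℝ) - 1)) *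
                  ∑ k ∈ Finset.univ.erase j,
                    ∑ ω : Fin M → S × C, (∏ i, w (ω i)) * L (ω j) (ω k)) := by
          rw [Finset.sum_comm]
          refine Finset.sum_congr rfl fun j _ => ?_
          rw [← Finset.mul_sum, Finset.sum_sub_distrib, ← Finset.mul_sum, Finset.sum_comm]
      _ = ∑ j : Fin M, (1 / (M : ℝ)) *
            (A0 - (1 / ((M : ℝ) - 1)) * (((M : ℝ) - 1) * B0)) := by
          refine Finset.sum_congr rfl fun j _ => ?_
          rw [h1 j]
          congr 2
          have hcon : ∀ k ∈ Finset.univ.erase j,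
              (∑ ω : Fin M → S × C, (∏ i, w (ω i)) * L (ω j) (ω k)) = B0 :=
            fun k hk => h2 j k (Ne.symm (Finset.ne_of_mem_erase hk))
          rw [Finset.sum_congr rfl hcon, Finset.sum_const,
            Finset.card_erase_of_mem (mem_univ j), card_univ,
            Fintype.card_fin, nsmul_eq_mul]
          congr 1
          have h1M : (1:ℕ) ≤ M := le_trans one_le_two hM
          push_cast [Nat.cast_sub h1M]
          ring
      _ = A0 - B0 := by
          rw [Finset.sum_const, card_univ, Fintype.card_fin, nsmul_eq_mul]
          field_simp
  rw [key]
  have hA : A0 = ∑ s : S, ∑ c : C, p s c * Real.log (p s c / (∑ s' : S, p s' c)) := by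
    simp only [hA0_def, hw_def, hL_def]
    rw [Fintype.sum_prod_type]
  have hB : B0 = ∑ s : S, (∑ c' : C, p s c')
      * ∑ c : C, (∑ s' : S, p s' c) * Real.log (p s c / (∑ s' : S, p s' c)) := by
    simp only [hB0_def, hw_def, hL_def]
    rw [Fintype.sum_prod_type]
    refine Finset.sum_congr rfl fun s _ => ?_
    rw [Finset.sum_mul]
    refine Finset.sum_congr rfl fun c1 _ => ?_
    rw [Fintype.sum_prod_type, Finset.sum_comm, Finset.mul_sum]
    refine Finset.sum_congr rfl fun c _ => ?_
    rw [Finset.sum_mul, Finset.mul_sum]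
    exact Finset.sum_congr rfl fun s2 _ => by dsimp only; ring
  rw [hA, hB]
end

section
/- Let S and C be finite nonempty types, let p be a joint probability mass function on S × C with strictly positive values, with conditional p(s|c) = p(s,c)/p_C(c), and let M ≥ 2. Let (s_1,c_1), …, (s_M,c_M) be independent and identically distributed random pairs, each distributed according to p. Then the mutual information satisfies I(s;c) ≤ E[ (1/M) Σ_{j=1}^M ( log p(s_j|c_j) − (1/(M−1)) Σ_{k ≠ j} log p(s_j|c_k) ) ]. -/
open Finset
open Finset

section aux
variable {ι X : Type*} [Fintype ι] [Fintype X] [DecidableEq ι]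

lemma sum_pi_prod (f : ι → X → ℝ) :
    ∑ ω : ι → X, ∏ i, f i (ω i) = ∏ i, ∑ x, f i x := by
  rw [Finset.prod_univ_sum, Fintype.piFinset_univ]

lemma sum_prod_single (q : X → ℝ) (hq : ∑ x : X, q x = 1) (j : ι) (F : X → ℝ) :
    ∑ ω : ι → X, (∏ i, q (ω i)) * F (ω j) = ∑ x, q x * F x := by
  have h1 : ∀ ω : ι → X, (∏ i, q (ω i)) * F (ω j)
      = ∏ i, (if i = j then q (ω i) * F (ω i) else q (ω i)) := by
    intro ω
    rw [← Finset.mul_prod_erase univ (fun i => q (ω i)) (mem_univ j),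
        ← Finset.mul_prod_erase univ _ (mem_univ j)]
    simp only [if_pos rfl, if_true]
    rw [Finset.prod_congr rfl (fun i hi => if_neg (Finset.ne_of_mem_erase hi))]
    ring
  simp only [h1]
  rw [sum_pi_prod (fun i x => if i = j then q x * F x else q x)]
  rw [← Finset.mul_prod_erase univ _ (mem_univ j)]
  simp only [if_pos rfl]
  rw [Finset.prod_eq_one, mul_one]
  · simp
  · intro i hi
    simp [if_neg (Finset.ne_of_mem_erase hi), hq]

lemma sum_prod_two (q : X → ℝ) (hq : ∑ x : X, q x = 1) {j k : ι} (hjk : j ≠ k)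
    (F G : X → ℝ) :
    ∑ ω : ι → X, (∏ i, q (ω i)) * (F (ω j) * G (ω k))
      = (∑ x, q x * F x) * (∑ x, q x * G x) := by
  have h1 : ∀ ω : ι → X, (∏ i, q (ω i)) * (F (ω j) * G (ω k))
      = ∏ i, (q (ω i) * (if i = j then F (ω i) else 1) * (if i = k then G (ω i) else 1)) := by
    intro ω
    simp only [Finset.prod_mul_distrib]
    rw [Finset.prod_ite_eq' univ j (fun i => F (ω i)),
        Finset.prod_ite_eq' univ k (fun i => G (ω i))]
    simp only [mem_univ, if_pos, if_true]
    ring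
  simp only [h1]
  rw [sum_pi_prod (fun i x => q x * (if i = j then F x else 1) * (if i = k then G x else 1))]
  have h2 : ∀ i : ι, (∑ x, q x * (if i = j then F x else 1) * (if i = k then G x else 1))
      = (if i = j then (∑ x, q x * F x) else 1) * (if i = k then (∑ x, q x * G x) else 1) := by
    intro i
    by_cases h : i = j
    · subst h
      simp [hjk, hq]
    · by_cases h' : i = k
      · subst h'
        simp [h, hq]
      · simp [h, h', hq]
  simp only [h2]
  rw [Finset.prod_mul_distrib, Finset.prod_ite_eq' univ j, Finset.prod_ite_eq' univ k]
  simp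

lemma sum_prod_pair [DecidableEq X] (q : X → ℝ) (hq : ∑ x : X, q x = 1) {j k : ι} (hjk : j ≠ k)
    (G : X → X → ℝ) :
    ∑ ω : ι → X, (∏ i, q (ω i)) * G (ω j) (ω k)
      = ∑ x, ∑ y, q x * q y * G x y := by
  calc ∑ ω : ι → X, (∏ i, q (ω i)) * G (ω j) (ω k)
      = ∑ ω : ι → X, ∑ x, (∏ i, q (ω i)) * ((if ω j = x then 1 else 0) * G x (ω k)) := by
        refine Finset.sum_congr rfl fun ω _ => ?_
        rw [← Finset.mul_sum]
        congr 1
        simp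
    _ = ∑ x, ∑ ω : ι → X, (∏ i, q (ω i))
          * ((fun u => if u = x then 1 else 0) (ω j) * (fun u => G x u) (ω k)) := by
        rw [Finset.sum_comm]
    _ = ∑ x, (∑ u, q u * (if u = x then 1 else 0)) * (∑ u, q u * G x u) := by
        exact Finset.sum_congr rfl fun x _ =>
          sum_prod_two q hq hjk (fun u => if u = x then 1 else 0) (fun u => G x u)
    _ = ∑ x, ∑ y, q x * q y * G x y := by
        refine Finset.sum_congr rfl fun x _ => ?_
        have : (∑ u, q u * (if u = x then 1 else 0)) = q x := by
          simp [mul_ite, Finset.sum_ite_eq' univ x q]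
        rw [this, Finset.mul_sum]
        exact Finset.sum_congr rfl fun y _ => by ring

lemma expectation_eval [DecidableEq X] (q : X → ℝ) (hq : ∑ x : X, q x = 1)
    (A : X → ℝ) (B : X → X → ℝ) (a b : ℝ) :
    ∑ ω : ι → X, (∏ i, q (ω i)) *
        (a * ∑ j, (A (ω j) - b * ∑ k ∈ univ.erase j, B (ω j) (ω k)))
      = a * ∑ j : ι, ((∑ x, q x * A x)
          - b * (((univ.erase j).card : ℝ) * ∑ x, ∑ y, q x * q y * B x y)) := by
  have l1 : ∀ ω : ι → X,
      (∏ i, q (ω i)) * (a * ∑ j, (A (ω j) - b * ∑ k ∈ univ.erase j, B (ω j) (ω k)))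
      = ∑ j, a * ((∏ i, q (ω i)) * A (ω j)
          - b * ∑ k ∈ univ.erase j, (∏ i, q (ω i)) * B (ω j) (ω k)) := by
    intro ω
    rw [Finset.mul_sum, Finset.mul_sum]
    refine Finset.sum_congr rfl fun j _ => ?_
    rw [← Finset.mul_sum]
    ring
  rw [Finset.sum_congr rfl fun ω _ => l1 ω, Finset.sum_comm, Finset.mul_sum]
  refine Finset.sum_congr rfl fun j _ => ?_
  rw [← Finset.mul_sum]
  congr 1
  rw [Finset.sum_sub_distrib, sum_prod_single q hq j A]
  congr 1
  rw [← Finset.mul_sum, Finset.sum_comm]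
  congr 1
  rw [Finset.sum_congr rfl fun k hk =>
        sum_prod_pair q hq (Finset.ne_of_mem_erase hk).symm B,
      Finset.sum_const, nsmul_eq_mul]

end aux

/-- Theorem 3.1 of the paper (sample-based mutual-information upper bound).
`M ≥ 2` i.i.d. pairs `(s_j, c_j) ~ p` are modeled by the product law on
`Fin M → S × C`: an outcome `ω` has probability `∏ j, p (ω j)`, and the
expectation of a statistic is the correspondingly weighted sum.  The mutual
information `I(s;c)` is bounded above by the expectation of the leave-one-out
statistic
`(1/M) ∑_j ( log p(s_j|c_j) − (1/(M−1)) ∑_{k ≠ j} log p(s_j|c_k) )`,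
where `p(s|c) = p(s,c)/p_C(c)`. -/
theorem mi_le_leave_one_out_expectation
    {S C : Type*} [Fintype S] [Fintype C] [Nonempty S] [Nonempty C]
    (p : S → C → ℝ)
    (hpos : ∀ s c, 0 < p s c)
    (hsum : ∑ s : S, ∑ c : C, p s c = 1)
    (M : ℕ) (hM : 2 ≤ M) :
    (∑ s : S, ∑ c : C,
        p s c * Real.log (p s c / ((∑ c' : C, p s c') * (∑ s' : S, p s' c))))
      ≤ ∑ ω : Fin M → S × C,
          (∏ j : Fin M, p (ω j).1 (ω j).2) *
            ((1 / (M : ℝ)) * ∑ j : Fin M,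
              (Real.log (p (ω j).1 (ω j).2 / (∑ s' : S, p s' (ω j).2))
                - (1 / ((M : ℝ) - 1)) *
                    ∑ k ∈ Finset.univ.erase j,
                      Real.log (p (ω j).1 (ω k).2 / (∑ s' : S, p s' (ω k).2)))) := by
  classical
  have hq : ∑ x : S × C, p x.1 x.2 = 1 := by
    rw [Fintype.sum_prod_type]; exact hsum
  have key := expectation_eval (ι := Fin M) (X := S × C)
      (fun x : S × C => p x.1 x.2) hq
      (fun x : S × C => Real.log (p x.1 x.2 / ∑ s' : S, p s' x.2))
      (fun x y : S × C => Real.log (p x.1 y.2 / ∑ s' : S, p s' y.2))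
      (1 / (M : ℝ)) (1 / ((M : ℝ) - 1))
  refine le_trans ?_ (le_of_eq key.symm)
  have hcard : ∀ j : Fin M, (((univ.erase j).card : ℝ)) = (M : ℝ) - 1 := by
    intro j
    rw [Finset.card_erase_of_mem (mem_univ j), Finset.card_univ, Fintype.card_fin]
    have h1 : (1:ℕ) ≤ M := by omega
    push_cast [h1]
    ring
  simp only [hcard]
  rw [Finset.sum_const, Finset.card_univ, Fintype.card_fin, nsmul_eq_mul]
  have hM2 : (2:ℝ) ≤ (M:ℝ) := by exact_mod_cast hM
  have hM1 : ((M:ℝ) - 1) ≠ 0 := by linarith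
  have hM0 : (M:ℝ) ≠ 0 := by linarith
  have hsimp : ∀ EA EB : ℝ, 1/(M:ℝ) * ((M:ℝ) * (EA - 1/((M:ℝ)-1) * (((M:ℝ)-1) * EB))) = EA - EB := by
    intro EA EB
    field_simp
  rw [hsimp]
  -- positivity of marginals
  have hpS : ∀ s : S, 0 < ∑ c' : C, p s c' :=
    fun s => Finset.sum_pos (fun c _ => hpos s c) univ_nonempty
  have hpC : ∀ c : C, 0 < ∑ s' : S, p s' c :=
    fun c => Finset.sum_pos (fun s _ => hpos s c) univ_nonempty
  have hpC1 : ∑ c : C, ∑ s' : S, p s' c = 1 := by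
    rw [Finset.sum_comm]; exact hsum
  -- rewrite EB as ∑ s pS s * (∑ c pC c * log)
  have hEB : (∑ x : S × C, ∑ y : S × C,
        p x.1 x.2 * p y.1 y.2 * Real.log (p x.1 y.2 / ∑ s' : S, p s' y.2))
      = ∑ s : S, (∑ c : C, p s c) *
          ∑ c' : C, (∑ s' : S, p s' c') * Real.log (p s c' / ∑ s'' : S, p s'' c') := by
    rw [Fintype.sum_prod_type]
    refine Finset.sum_congr rfl fun s _ => ?_
    calc ∑ c : C, ∑ y : S × C, p s c * p y.1 y.2 * Real.log (p s y.2 / ∑ s' : S, p s' y.2)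
        = ∑ c : C, p s c * ∑ y : S × C, p y.1 y.2 * Real.log (p s y.2 / ∑ s' : S, p s' y.2) := by
          refine Finset.sum_congr rfl fun c _ => ?_
          rw [Finset.mul_sum]
          exact Finset.sum_congr rfl fun y _ => by ring
      _ = (∑ c : C, p s c) * ∑ y : S × C, p y.1 y.2 * Real.log (p s y.2 / ∑ s' : S, p s' y.2) := by
          rw [Finset.sum_mul]
      _ = (∑ c : C, p s c) *
            ∑ c' : C, (∑ s' : S, p s' c') * Real.log (p s c' / ∑ s'' : S, p s'' c') := by
          congr 1
          rw [Fintype.sum_prod_type, Finset.sum_comm]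
          refine Finset.sum_congr rfl fun c' _ => ?_
          dsimp only
          rw [← Finset.sum_mul]
  rw [hEB, Fintype.sum_prod_type]
  -- rewrite LHS
  have hLHS : (∑ s : S, ∑ c : C,
        p s c * Real.log (p s c / ((∑ c' : C, p s c') * ∑ s' : S, p s' c)))
      = (∑ s : S, ∑ c : C, p s c * Real.log (p s c / ∑ s' : S, p s' c))
        - ∑ s : S, (∑ c : C, p s c) * Real.log (∑ c' : C, p s c') := by
    rw [← Finset.sum_sub_distrib]
    refine Finset.sum_congr rfl fun s _ => ?_
    have hterm : ∀ c : C, p s c * Real.log (p s c / ((∑ c' : C, p s c') * ∑ s' : S, p s' c))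
        = p s c * Real.log (p s c / ∑ s' : S, p s' c) - p s c * Real.log (∑ c' : C, p s c') := by
      intro c
      rw [Real.log_div (hpos s c).ne' (mul_pos (hpS s) (hpC c)).ne',
          Real.log_div (hpos s c).ne' (hpC c).ne',
          Real.log_mul (hpS s).ne' (hpC c).ne']
      ring
    rw [Finset.sum_congr rfl fun c _ => hterm c, Finset.sum_sub_distrib, ← Finset.sum_mul]
  rw [hLHS]
  -- Jensen per s
  have jensen : ∀ s : S,
      (∑ c' : C, (∑ s' : S, p s' c') * Real.log (p s c' / ∑ s'' : S, p s'' c'))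
        ≤ Real.log (∑ c' : C, p s c') := by
    intro s
    have h := (strictConcaveOn_log_Ioi.concaveOn).le_map_sum
        (t := Finset.univ) (w := fun c => ∑ s' : S, p s' c)
        (p := fun c => p s c / ∑ s' : S, p s' c)
        (fun c _ => (hpC c).le) hpC1
        (fun c _ => Set.mem_Ioi.mpr (div_pos (hpos s c) (hpC c)))
    have hz : ∑ c : C, (∑ s' : S, p s' c) • (p s c / ∑ s' : S, p s' c) = ∑ c' : C, p s c' := by
      refine Finset.sum_congr rfl fun c _ => ?_
      rw [smul_eq_mul, mul_comm, div_mul_cancel₀ _ (hpC c).ne']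
    rw [hz] at h
    simpa [smul_eq_mul] using h
  have main_ineq : (∑ s : S, (∑ c : C, p s c) *
        ∑ c' : C, (∑ s' : S, p s' c') * Real.log (p s c' / ∑ s'' : S, p s'' c'))
      ≤ ∑ s : S, (∑ c : C, p s c) * Real.log (∑ c' : C, p s c') :=
    Finset.sum_le_sum fun s _ => mul_le_mul_of_nonneg_left (jensen s) (hpS s).le
  exact sub_le_sub_left main_ineq _
end

section
/- Let X and C be finite nonempty types, let p be a joint probability mass function on X × C with strictly positive values, with marginals p_X, p_C and conditional p(x|c) = p(x,c)/p_C(c), and let q : X × C → ℝ be any family of conditional probability mass functions with q(x|c) > 0 for all x, c and Σ_x q(x|c) = 1 for every c. Then I(x;c) = H(x) + Σ_c p_C(c) · KL( p(·|c) ‖ q(·|c) ) + Σ_{x,c} p(x,c) · log q(x|c), where H(x) = −Σ_x p_X(x) · log p_X(x) and KL( p(·|c) ‖ q(·|c) ) = Σ_x p(x|c) · log( p(x|c)/q(x|c) ). -/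
/-- The exact decomposition from the appendix of the paper (proof of the
variational lower bound, Eq. (6)): for a strictly positive joint pmf `p` on
`X × C` and any family `q(·|c)` of strictly positive conditional pmfs,
`I(x;c) = H(x) + ∑_c p_C(c) · KL( p(·|c) ‖ q(·|c) ) + ∑_{x,c} p(x,c) log q(x|c)`,
where `p(x|c) = p(x,c)/p_C(c)`, `p_X(x) = ∑ c, p(x,c)`, `p_C(c) = ∑ x, p(x,c)`,
`H(x) = −∑_x p_X(x) log p_X(x)`, and
`KL(p(·|c)‖q(·|c)) = ∑_x p(x|c) log (p(x|c)/q(x|c))`. -/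
theorem mi_kl_decomposition
    {X C : Type*} [Fintype X] [Fintype C] [Nonempty X] [Nonempty C]
    (p : X → C → ℝ)
    (hpos : ∀ x c, 0 < p x c)
    (hsum : ∑ x : X, ∑ c : C, p x c = 1)
    (q : X → C → ℝ)
    (hqpos : ∀ x c, 0 < q x c)
    (hqsum : ∀ c : C, ∑ x : X, q x c = 1) :
    (∑ x : X, ∑ c : C,
        p x c * Real.log (p x c / ((∑ c' : C, p x c') * (∑ x' : X, p x' c))))
      = (-∑ x : X, (∑ c' : C, p x c') * Real.log (∑ c' : C, p x c'))
        + (∑ c : C, (∑ x' : X, p x' c) *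
            (∑ x : X, (p x c / (∑ x' : X, p x' c)) *
              Real.log ((p x c / (∑ x' : X, p x' c)) / q x c)))
        + ∑ x : X, ∑ c : C, p x c * Real.log (q x c) := by
  have hXpos : ∀ x : X, 0 < ∑ c' : C, p x c' :=
    fun x => Finset.sum_pos (fun c _ => hpos x c) Finset.univ_nonempty
  have hCpos : ∀ c : C, 0 < ∑ x' : X, p x' c :=
    fun c => Finset.sum_pos (fun x _ => hpos x c) Finset.univ_nonempty
  -- Rewrite the entropy term as a double sum
  have h1 : (-∑ x : X, (∑ c' : C, p x c') * Real.log (∑ c' : C, p x c'))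
      = ∑ x : X, ∑ c : C, p x c * (-Real.log (∑ c' : C, p x c')) := by
    rw [← Finset.sum_neg_distrib]
    refine Finset.sum_congr rfl fun x _ => ?_
    rw [Finset.sum_mul]
    simp [Finset.sum_neg_distrib, mul_comm]
  -- Rewrite the KL term as a double sum
  have h2 : (∑ c : C, (∑ x' : X, p x' c) *
        (∑ x : X, (p x c / (∑ x' : X, p x' c)) *
          Real.log ((p x c / (∑ x' : X, p x' c)) / q x c)))
      = ∑ x : X, ∑ c : C, p x c *
          (Real.log (p x c) - Real.log (∑ x' : X, p x' c) - Real.log (q x c)) := by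
    simp_rw [Finset.mul_sum]
    rw [Finset.sum_comm]
    refine Finset.sum_congr rfl fun x _ => ?_
    refine Finset.sum_congr rfl fun c _ => ?_
    have hC := (hCpos c).ne'
    have hdivpos : 0 < p x c / (∑ x' : X, p x' c) := div_pos (hpos x c) (hCpos c)
    rw [Real.log_div hdivpos.ne' (hqpos x c).ne',
        Real.log_div (hpos x c).ne' hC]
    field_simp
  rw [h1, h2, ← Finset.sum_add_distrib, ← Finset.sum_add_distrib]
  refine Finset.sum_congr rfl fun x _ => ?_
  rw [← Finset.sum_add_distrib, ← Finset.sum_add_distrib]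
  refine Finset.sum_congr rfl fun c _ => ?_
  rw [Real.log_div (hpos x c).ne' (mul_pos (hXpos x) (hCpos c)).ne',
      Real.log_mul (hXpos x).ne' (hCpos c).ne']
  ring
end

section
/- Let X and C be finite nonempty types, let p be a joint probability mass function on X × C with strictly positive values, and let q : X × C → ℝ be any family of conditional probability mass functions with q(x|c) > 0 for all x, c and Σ_x q(x|c) = 1 for every c. Then I(x;c) ≥ H(x) + Σ_{x,c} p(x,c) · log q(x|c), where H(x) = −Σ_x p_X(x) · log p_X(x). -/
/-- The Barber–Agakov variational lower bound on mutual information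
(Eq. (2) of the paper): for a strictly positive joint pmf `p` on `X × C` and
any family `q(·|c)` of strictly positive conditional pmfs,
`I(x;c) ≥ H(x) + ∑_{x,c} p(x,c) log q(x|c)`, where
`p_X(x) = ∑ c, p(x,c)`, `p_C(c) = ∑ x, p(x,c)`, and
`H(x) = −∑_x p_X(x) log p_X(x)`. -/
theorem barber_agakov_lower_bound
    {X C : Type*} [Fintype X] [Fintype C] [Nonempty X] [Nonempty C]
    (p : X → C → ℝ)
    (hpos : ∀ x c, 0 < p x c)
    (hsum : ∑ x : X, ∑ c : C, p x c = 1)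
    (q : X → C → ℝ)
    (hqpos : ∀ x c, 0 < q x c)
    (hqsum : ∀ c : C, ∑ x : X, q x c = 1) :
    (-∑ x : X, (∑ c' : C, p x c') * Real.log (∑ c' : C, p x c'))
        + (∑ x : X, ∑ c : C, p x c * Real.log (q x c))
      ≤ ∑ x : X, ∑ c : C,
          p x c * Real.log (p x c / ((∑ c' : C, p x c') * (∑ x' : X, p x' c))) := by
  have hpX : ∀ x, 0 < ∑ c' : C, p x c' :=
    fun x => Finset.sum_pos (fun c _ => hpos x c) Finset.univ_nonempty
  have hpC : ∀ c, 0 < ∑ x' : X, p x' c :=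
    fun c => Finset.sum_pos (fun x _ => hpos x c) Finset.univ_nonempty
  -- key Gibbs-type inequality
  have key : ∑ x : X, ∑ c : C,
      p x c * Real.log (q x c * (∑ x' : X, p x' c) / p x c) ≤ 0 := by
    have h1 : ∀ x c, p x c * Real.log (q x c * (∑ x' : X, p x' c) / p x c)
        ≤ q x c * (∑ x' : X, p x' c) - p x c := by
      intro x c
      have ht : 0 < q x c * (∑ x' : X, p x' c) / p x c := by
        have := hqpos x c; have := hpC c; have := hpos x c; positivity
      have hlog := Real.log_le_sub_one_of_pos ht
      calc p x c * Real.log (q x c * (∑ x' : X, p x' c) / p x c)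
          ≤ p x c * (q x c * (∑ x' : X, p x' c) / p x c - 1) :=
            mul_le_mul_of_nonneg_left hlog (hpos x c).le
        _ = q x c * (∑ x' : X, p x' c) - p x c := by
            field_simp [(hpos x c).ne']
    calc ∑ x : X, ∑ c : C, p x c * Real.log (q x c * (∑ x' : X, p x' c) / p x c)
        ≤ ∑ x : X, ∑ c : C, (q x c * (∑ x' : X, p x' c) - p x c) :=
          Finset.sum_le_sum fun x _ => Finset.sum_le_sum fun c _ => h1 x c
      _ = 0 := by
          have hq1 : ∑ x : X, ∑ c : C, q x c * (∑ x' : X, p x' c) = 1 := by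
            rw [Finset.sum_comm]
            simp_rw [← Finset.sum_mul, hqsum, one_mul]
            rw [← hsum, Finset.sum_comm]
          simp [Finset.sum_sub_distrib, hq1, hsum]
  -- pointwise algebraic identity
  have point : ∀ x c,
      p x c * Real.log (p x c / ((∑ c' : C, p x c') * (∑ x' : X, p x' c)))
        + p x c * Real.log (∑ c' : C, p x c') - p x c * Real.log (q x c)
      = -(p x c * Real.log (q x c * (∑ x' : X, p x' c) / p x c)) := by
    intro x c
    rw [Real.log_div (hpos x c).ne' (mul_pos (hpX x) (hpC c)).ne',
        Real.log_mul (hpX x).ne' (hpC c).ne',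
        Real.log_div (mul_pos (hqpos x c) (hpC c)).ne' (hpos x c).ne',
        Real.log_mul (hqpos x c).ne' (hpC c).ne']
    ring
  -- marginal entropy as double sum
  have hH : ∑ x : X, (∑ c' : C, p x c') * Real.log (∑ c' : C, p x c')
      = ∑ x : X, ∑ c : C, p x c * Real.log (∑ c' : C, p x c') := by
    refine Finset.sum_congr rfl fun x _ => ?_
    rw [Finset.sum_mul]
  have hcomb : ∑ x : X, ∑ c : C,
      (p x c * Real.log (p x c / ((∑ c' : C, p x c') * (∑ x' : X, p x' c)))
        + p x c * Real.log (∑ c' : C, p x c') - p x c * Real.log (q x c))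
      = -∑ x : X, ∑ c : C, p x c * Real.log (q x c * (∑ x' : X, p x' c) / p x c) := by
    simp_rw [point]
    simp [Finset.sum_neg_distrib]
  have hsplit : ∑ x : X, ∑ c : C,
      (p x c * Real.log (p x c / ((∑ c' : C, p x c') * (∑ x' : X, p x' c)))
        + p x c * Real.log (∑ c' : C, p x c') - p x c * Real.log (q x c))
      = (∑ x : X, ∑ c : C, p x c * Real.log (p x c / ((∑ c' : C, p x c') * (∑ x' : X, p x' c))))
        + (∑ x : X, ∑ c : C, p x c * Real.log (∑ c' : C, p x c'))
        - (∑ x : X, ∑ c : C, p x c * Real.log (q x c)) := by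
    simp [Finset.sum_add_distrib, Finset.sum_sub_distrib]
  linarith [hcomb, hsplit, key, hH]
end

section
/- Let X, Y, Z be finite nonempty types carrying jointly distributed random variables x, y, z with a strictly positive joint probability mass function. Define the Variation of Information between two of these variables by VI(u; v) = H(u) + H(v) − 2·I(u; v). Then VI satisfies the triangle inequality VI(y; x) + VI(x; z) ≥ VI(y; z). -/
private lemma mul_log_sub_le {a b : ℝ} (ha : 0 < a) (hb : 0 < b) :
    a * (Real.log b - Real.log a) ≤ b - a := by
  rw [← Real.log_div hb.ne' ha.ne']
  have h := Real.log_le_sub_one_of_pos (div_pos hb ha)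
  have h2 : a * Real.log (b / a) ≤ a * (b / a - 1) := by
    exact mul_le_mul_of_nonneg_left h ha.le
  have h3 : a * (b / a - 1) = b - a := by field_simp
  linarith

/-- Positivity of the "disentanglement" triple sum. -/
private lemma core_nonneg {X Y Z : Type*} [Fintype X] [Fintype Y] [Fintype Z]
    [Nonempty X] [Nonempty Y] [Nonempty Z]
    (p : X → Y → Z → ℝ) (hpos : ∀ x y z, 0 < p x y z)
    (hsum : ∑ x : X, ∑ y : Y, ∑ z : Z, p x y z = 1)
    (px : X → ℝ) (pxy : X → Y → ℝ) (pxz : X → Z → ℝ) (pyz : Y → Z → ℝ)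
    (hpx : ∀ x, px x = ∑ y : Y, ∑ z : Z, p x y z)
    (hpxy : ∀ x y, pxy x y = ∑ z : Z, p x y z)
    (hpxz : ∀ x z, pxz x z = ∑ y : Y, p x y z)
    (hpyz : ∀ y z, pyz y z = ∑ x : X, p x y z) :
    0 ≤ ∑ x : X, ∑ y : Y, ∑ z : Z, p x y z *
      (Real.log (px x) + Real.log (pyz y z)
        - Real.log (pxy x y) - Real.log (pxz x z)) := by
  have hpx0 : ∀ x, 0 < px x := by
    intro x; rw [hpx]
    exact Finset.sum_pos (fun y _ => Finset.sum_pos (fun z _ => hpos x y z)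
      Finset.univ_nonempty) Finset.univ_nonempty
  have hpxy0 : ∀ x y, 0 < pxy x y := by
    intro x y; rw [hpxy]
    exact Finset.sum_pos (fun z _ => hpos x y z) Finset.univ_nonempty
  have hpxz0 : ∀ x z, 0 < pxz x z := by
    intro x z; rw [hpxz]
    exact Finset.sum_pos (fun y _ => hpos x y z) Finset.univ_nonempty
  have hpyz0 : ∀ y z, 0 < pyz y z := by
    intro y z; rw [hpyz]
    exact Finset.sum_pos (fun x _ => hpos x y z) Finset.univ_nonempty
  -- part A : Gibbs inequality  ∑ p (log q - log p) ≤ ∑ q - ∑ p = 0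
  -- with q = pxy * pxz / px
  have hq0 : ∀ x y z, 0 < pxy x y * pxz x z / px x := by
    intro x y z
    exact div_pos (mul_pos (hpxy0 x y) (hpxz0 x z)) (hpx0 x)
  have hA : ∑ x : X, ∑ y : Y, ∑ z : Z,
      p x y z * (Real.log (pxy x y * pxz x z / px x) - Real.log (p x y z))
      ≤ 0 := by
    have hle : ∑ x : X, ∑ y : Y, ∑ z : Z,
        p x y z * (Real.log (pxy x y * pxz x z / px x) - Real.log (p x y z))
        ≤ ∑ x : X, ∑ y : Y, ∑ z : Z, (pxy x y * pxz x z / px x - p x y z) := by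
      refine Finset.sum_le_sum fun x _ => Finset.sum_le_sum fun y _ =>
        Finset.sum_le_sum fun z _ => ?_
      exact mul_log_sub_le (hpos x y z) (hq0 x y z)
    have hqsum : ∑ x : X, ∑ y : Y, ∑ z : Z, (pxy x y * pxz x z / px x) = 1 := by
      have : ∀ x : X, ∑ y : Y, ∑ z : Z, (pxy x y * pxz x z / px x) = px x := by
        intro x
        have h1 : ∑ y : Y, ∑ z : Z, (pxy x y * pxz x z / px x)
            = (∑ y : Y, pxy x y) * (∑ z : Z, pxz x z) / px x := by
          rw [Finset.sum_mul, Finset.sum_div]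
          refine Finset.sum_congr rfl fun y _ => ?_
          rw [Finset.mul_sum, Finset.sum_div]
        have h2 : ∑ y : Y, pxy x y = px x := by
          rw [hpx]; exact Finset.sum_congr rfl fun y _ => hpxy x y
        have h3 : ∑ z : Z, pxz x z = px x := by
          rw [hpx, Finset.sum_comm]
          exact Finset.sum_congr rfl fun z _ => hpxz x z
        rw [h1, h2, h3]
        field_simp
      calc ∑ x : X, ∑ y : Y, ∑ z : Z, (pxy x y * pxz x z / px x)
          = ∑ x : X, px x := Finset.sum_congr rfl fun x _ => this x
        _ = 1 := by rw [← hsum]; exact Finset.sum_congr rfl fun x _ => hpx x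
    have hsplit : ∑ x : X, ∑ y : Y, ∑ z : Z,
        (pxy x y * pxz x z / px x - p x y z)
        = (∑ x : X, ∑ y : Y, ∑ z : Z, (pxy x y * pxz x z / px x))
          - (∑ x : X, ∑ y : Y, ∑ z : Z, p x y z) := by
      simp [Finset.sum_sub_distrib]
    rw [hsplit, hqsum, hsum] at hle
    linarith
  -- part B : ∑ p (log p - log pyz) ≤ 0 termwise
  have hB : ∑ x : X, ∑ y : Y, ∑ z : Z,
      p x y z * (Real.log (p x y z) - Real.log (pyz y z)) ≤ 0 := by
    refine Finset.sum_nonpos fun x _ => Finset.sum_nonpos fun y _ =>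
      Finset.sum_nonpos fun z _ => ?_
    have hle : p x y z ≤ pyz y z := by
      rw [hpyz]
      exact Finset.single_le_sum (fun x' _ => (hpos x' y z).le) (Finset.mem_univ x)
    have : Real.log (p x y z) ≤ Real.log (pyz y z) :=
      Real.log_le_log (hpos x y z) hle
    exact mul_nonpos_of_nonneg_of_nonpos (hpos x y z).le (by linarith)
  -- combine: D = -(A + B)
  have hDeq : ∑ x : X, ∑ y : Y, ∑ z : Z, p x y z *
      (Real.log (px x) + Real.log (pyz y z)
        - Real.log (pxy x y) - Real.log (pxz x z))
      = -((∑ x : X, ∑ y : Y, ∑ z : Z,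
          p x y z * (Real.log (pxy x y * pxz x z / px x) - Real.log (p x y z)))
        + (∑ x : X, ∑ y : Y, ∑ z : Z,
          p x y z * (Real.log (p x y z) - Real.log (pyz y z)))) := by
    rw [← Finset.sum_add_distrib, ← Finset.sum_neg_distrib]
    refine Finset.sum_congr rfl fun x _ => ?_
    rw [← Finset.sum_add_distrib, ← Finset.sum_neg_distrib]
    refine Finset.sum_congr rfl fun y _ => ?_
    rw [← Finset.sum_add_distrib, ← Finset.sum_neg_distrib]
    refine Finset.sum_congr rfl fun z _ => ?_
    rw [Real.log_div (mul_pos (hpxy0 x y) (hpxz0 x z)).ne' (hpx0 x).ne',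
      Real.log_mul (hpxy0 x y).ne' (hpxz0 x z).ne']
    ring
  rw [hDeq]
  linarith

/-- Eq. (4) of the paper: the triangle inequality for Variation of Information.
For jointly distributed random variables `x, y, z` with strictly positive joint
pmf `p` on `X × Y × Z`, with entropies `H(·)`, pairwise mutual informations
`I(·;·)`, and Variation of Information `VI(u;v) = H(u) + H(v) − 2·I(u;v)`,
one has `VI(y;x) + VI(x;z) ≥ VI(y;z)`. -/
theorem vi_triangle_inequality
    {X Y Z : Type*} [Fintype X] [Fintype Y] [Fintype Z]
    [Nonempty X] [Nonempty Y] [Nonempty Z]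
    (p : X → Y → Z → ℝ)
    (hpos : ∀ x y z, 0 < p x y z)
    (hsum : ∑ x : X, ∑ y : Y, ∑ z : Z, p x y z = 1)
    (Hx Hy Hz Ixy Ixz Iyz VIyx VIxz VIyz : ℝ)
    (hHx : Hx = -∑ x : X, (∑ y : Y, ∑ z : Z, p x y z)
        * Real.log (∑ y : Y, ∑ z : Z, p x y z))
    (hHy : Hy = -∑ y : Y, (∑ x : X, ∑ z : Z, p x y z)
        * Real.log (∑ x : X, ∑ z : Z, p x y z))
    (hHz : Hz = -∑ z : Z, (∑ x : X, ∑ y : Y, p x y z)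
        * Real.log (∑ x : X, ∑ y : Y, p x y z))
    (hIxy : Ixy = ∑ x : X, ∑ y : Y, (∑ z : Z, p x y z)
        * Real.log ((∑ z : Z, p x y z)
            / ((∑ y' : Y, ∑ z : Z, p x y' z) * (∑ x' : X, ∑ z : Z, p x' y z))))
    (hIxz : Ixz = ∑ x : X, ∑ z : Z, (∑ y : Y, p x y z)
        * Real.log ((∑ y : Y, p x y z)
            / ((∑ y' : Y, ∑ z' : Z, p x y' z') * (∑ x' : X, ∑ y' : Y, p x' y' z))))
    (hIyz : Iyz = ∑ y : Y, ∑ z : Z, (∑ x : X, p x y z)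
        * Real.log ((∑ x : X, p x y z)
            / ((∑ x' : X, ∑ z' : Z, p x' y z') * (∑ x' : X, ∑ y' : Y, p x' y' z))))
    (hVIyx : VIyx = Hy + Hx - 2 * Ixy)
    (hVIxz : VIxz = Hx + Hz - 2 * Ixz)
    (hVIyz : VIyz = Hy + Hz - 2 * Iyz) :
    VIyz ≤ VIyx + VIxz := by
  -- positivity of all marginals (inlined)
  have hpx : ∀ x, (0:ℝ) < ∑ y : Y, ∑ z : Z, p x y z := fun x =>
    Finset.sum_pos (fun y _ => Finset.sum_pos (fun z _ => hpos x y z)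
      Finset.univ_nonempty) Finset.univ_nonempty
  have hpy : ∀ y, (0:ℝ) < ∑ x : X, ∑ z : Z, p x y z := fun y =>
    Finset.sum_pos (fun x _ => Finset.sum_pos (fun z _ => hpos x y z)
      Finset.univ_nonempty) Finset.univ_nonempty
  have hpz : ∀ z, (0:ℝ) < ∑ x : X, ∑ y : Y, p x y z := fun z =>
    Finset.sum_pos (fun x _ => Finset.sum_pos (fun y _ => hpos x y z)
      Finset.univ_nonempty) Finset.univ_nonempty
  have hpxy : ∀ x y, (0:ℝ) < ∑ z : Z, p x y z := fun x y =>
    Finset.sum_pos (fun z _ => hpos x y z) Finset.univ_nonempty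
  have hpxz : ∀ x z, (0:ℝ) < ∑ y : Y, p x y z := fun x z =>
    Finset.sum_pos (fun y _ => hpos x y z) Finset.univ_nonempty
  have hpyz : ∀ y z, (0:ℝ) < ∑ x : X, p x y z := fun y z =>
    Finset.sum_pos (fun x _ => hpos x y z) Finset.univ_nonempty
  -- sum reordering helpers
  have swapYZX : ∀ f : X → Y → Z → ℝ,
      ∑ y : Y, ∑ z : Z, ∑ x : X, f x y z = ∑ x : X, ∑ y : Y, ∑ z : Z, f x y z := by
    intro f
    calc ∑ y : Y, ∑ z : Z, ∑ x : X, f x y z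
        = ∑ y : Y, ∑ x : X, ∑ z : Z, f x y z :=
          Finset.sum_congr rfl fun y _ => Finset.sum_comm
      _ = ∑ x : X, ∑ y : Y, ∑ z : Z, f x y z := Finset.sum_comm
  have swapXZY : ∀ f : X → Y → Z → ℝ,
      ∑ x : X, ∑ z : Z, ∑ y : Y, f x y z = ∑ x : X, ∑ y : Y, ∑ z : Z, f x y z :=
    fun f => Finset.sum_congr rfl fun x _ => Finset.sum_comm
  -- canonical triple-sum forms
  have e_Hx : Hx = ∑ x : X, ∑ y : Y, ∑ z : Z,
      p x y z * (-Real.log (∑ y' : Y, ∑ z' : Z, p x y' z')) := by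
    rw [hHx, ← Finset.sum_neg_distrib]
    refine Finset.sum_congr rfl fun x _ => ?_
    rw [neg_mul_eq_mul_neg, Finset.sum_mul]
    refine Finset.sum_congr rfl fun y _ => ?_
    rw [Finset.sum_mul]
  have e_Ixy : Ixy = ∑ x : X, ∑ y : Y, ∑ z : Z, p x y z *
      (Real.log (∑ z' : Z, p x y z') - Real.log (∑ y' : Y, ∑ z' : Z, p x y' z')
        - Real.log (∑ x' : X, ∑ z' : Z, p x' y z')) := by
    rw [hIxy]
    refine Finset.sum_congr rfl fun x _ => Finset.sum_congr rfl fun y _ => ?_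
    rw [Real.log_div (hpxy x y).ne' (mul_pos (hpx x) (hpy y)).ne',
      Real.log_mul (hpx x).ne' (hpy y).ne', Finset.sum_mul]
    exact Finset.sum_congr rfl fun z _ => by ring
  have e_Ixz : Ixz = ∑ x : X, ∑ y : Y, ∑ z : Z, p x y z *
      (Real.log (∑ y' : Y, p x y' z) - Real.log (∑ y' : Y, ∑ z' : Z, p x y' z')
        - Real.log (∑ x' : X, ∑ y' : Y, p x' y' z)) := by
    rw [hIxz, ← swapXZY]
    refine Finset.sum_congr rfl fun x _ => Finset.sum_congr rfl fun z _ => ?_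
    rw [Real.log_div (hpxz x z).ne' (mul_pos (hpx x) (hpz z)).ne',
      Real.log_mul (hpx x).ne' (hpz z).ne', Finset.sum_mul]
    exact Finset.sum_congr rfl fun y _ => by ring
  have e_Iyz : Iyz = ∑ x : X, ∑ y : Y, ∑ z : Z, p x y z *
      (Real.log (∑ x' : X, p x' y z) - Real.log (∑ x' : X, ∑ z' : Z, p x' y z')
        - Real.log (∑ x' : X, ∑ y' : Y, p x' y' z)) := by
    rw [hIyz, ← swapYZX]
    refine Finset.sum_congr rfl fun y _ => Finset.sum_congr rfl fun z _ => ?_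
    rw [Real.log_div (hpyz y z).ne' (mul_pos (hpy y) (hpz z)).ne',
      Real.log_mul (hpy y).ne' (hpz z).ne', Finset.sum_mul]
    exact Finset.sum_congr rfl fun x _ => by ring
  -- combine the four sums
  have comb : ∀ f g h k : X → Y → Z → ℝ,
      (∑ x : X, ∑ y : Y, ∑ z : Z, f x y z) + (∑ x : X, ∑ y : Y, ∑ z : Z, g x y z)
        - (∑ x : X, ∑ y : Y, ∑ z : Z, h x y z)
        - (∑ x : X, ∑ y : Y, ∑ z : Z, k x y z)
      = ∑ x : X, ∑ y : Y, ∑ z : Z, (f x y z + g x y z - h x y z - k x y z) := by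
    intro f g h k
    simp [Finset.sum_add_distrib, Finset.sum_sub_distrib]
  have key : Hx + Iyz - Ixy - Ixz = ∑ x : X, ∑ y : Y, ∑ z : Z, p x y z *
      (Real.log (∑ y' : Y, ∑ z' : Z, p x y' z') + Real.log (∑ x' : X, p x' y z)
        - Real.log (∑ z' : Z, p x y z') - Real.log (∑ y' : Y, p x y' z)) := by
    rw [e_Hx, e_Iyz, e_Ixy, e_Ixz, comb]
    exact Finset.sum_congr rfl fun x _ => Finset.sum_congr rfl fun y _ =>
      Finset.sum_congr rfl fun z _ => by ring
  have hD := core_nonneg p hpos hsum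
    (fun x => ∑ y : Y, ∑ z : Z, p x y z)
    (fun x y => ∑ z : Z, p x y z)
    (fun x z => ∑ y : Y, p x y z)
    (fun y z => ∑ x : X, p x y z)
    (fun _ => rfl) (fun _ _ => rfl) (fun _ _ => rfl) (fun _ _ => rfl)
  rw [← key] at hD
  linarith [hD]
end
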